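/- arXiv:1612.08255 — 9 statements merged into one kernel-verified Lean document; each statement's English description precedes it below -/
import Mathlib

section
/- Let F be a field of odd characteristic, let m ≥ 1, and let c_1,...,c_m be nonzero elements of F. Define the m×m matrix P over F by P_{jk} = τ if j = k and P_{jk} = τ - c_j - c_k if j ≠ k, where τ = c_1 + ... + c_m. Then the rank of P is at least m - 2. -/
open Matrix

lemma my_rank_add_le {m : ℕ} {F : Type*} [Field F]
    (A B : Matrix (Fin m) (Fin m) F) : (A + B).rank ≤ A.rank + B.rank := by
  rw [Matrix.rank, Matrix.rank, Matrix.rank, Matrix.mulVecLin_add]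
  have hle : LinearMap.range (A.mulVecLin + B.mulVecLin) ≤
      LinearMap.range A.mulVecLin ⊔ LinearMap.range B.mulVecLin := by
    rintro x ⟨y, rfl⟩
    exact Submodule.add_mem_sup ⟨y, rfl⟩ ⟨y, rfl⟩
  exact (Submodule.finrank_mono hle).trans
    (Submodule.finrank_add_le_finrank_add_finrank _ _)

theorem stmt0 (F : Type*) [Field F] (hodd : Odd (ringChar F))
    (m : ℕ) (hm : 1 ≤ m) (c : Fin m → F) (hc : ∀ j, c j ≠ 0) :
    m - 2 ≤ (Matrix.of (fun j k : Fin m =>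
      if j = k then (∑ i, c i) else (∑ i, c i) - c j - c k)).rank := by
  classical
  have h2 : (2 : F) ≠ 0 := by
    intro h
    have hd : ringChar F ∣ 2 := ringChar.dvd (by exact_mod_cast h)
    rcases (Nat.prime_two.eq_one_or_self_of_dvd _ hd) with h1 | h1
    · have : ((1 : ℕ) : F) = 0 := (ringChar.spec F 1).mpr (by rw [h1])
      simp at this
    · rw [h1] at hodd
      exact (by decide : ¬ Odd 2) hodd
  set τ := ∑ i, c i with hτ
  set P : Matrix (Fin m) (Fin m) F :=
    Matrix.of (fun j k : Fin m => if j = k then τ else τ - c j - c k) with hP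
  -- the rank-≤2 matrix
  set A : Matrix (Fin m) (Fin 2) F :=
    Matrix.of (fun j i => if i = 0 then τ - c j else 1) with hA
  set B : Matrix (Fin 2) (Fin m) F :=
    Matrix.of (fun i k => if i = 0 then 1 else - c k) with hB
  have hM : A * B = Matrix.of (fun j k : Fin m => τ - c j - c k) := by
    ext j k
    simp [hA, hB, Matrix.mul_apply, Fin.sum_univ_two]
    ring
  have hMrank : (A * B).rank ≤ 2 := by
    exact (Matrix.rank_mul_le_right A B).trans
      ((Matrix.rank_le_card_height B).trans (by simp))
  -- diagonal part
  have hD : Matrix.diagonal (fun j => 2 * c j) = P + (-(A * B)) := by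
    ext j k
    by_cases h : j = k
    · subst h; simp [hM, hP, Matrix.diagonal]
      ring
    · simp [hM, hP, Matrix.diagonal, h]
  have hDrank : (Matrix.diagonal (fun j => 2 * c j)).rank = m := by
    rw [Matrix.rank_diagonal]
    have e : {i : Fin m // 2 * c i ≠ 0} ≃ Fin m :=
      Equiv.subtypeUnivEquiv (fun j => mul_ne_zero h2 (hc j))
    rw [Fintype.card_congr e, Fintype.card_fin]
  have hneg : (-(A * B)).rank ≤ 2 := by
    have : (-(A * B)) = A * (-B) := by rw [Matrix.mul_neg]
    rw [this]
    exact (Matrix.rank_mul_le_right A (-B)).trans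
      ((Matrix.rank_le_card_height (-B)).trans (by simp))
  have key : m ≤ P.rank + 2 := by
    calc m = (Matrix.diagonal (fun j => 2 * c j)).rank := hDrank.symm
    _ = (P + (-(A * B))).rank := by rw [hD]
    _ ≤ P.rank + (-(A * B)).rank := my_rank_add_le _ _
    _ ≤ P.rank + 2 := by omega
  omega
end

section
/- Let A be a finite set of size m and F a field of odd characteristic, with nonzero coefficients c_a ∈ F for each a ∈ A. If the function T : A × A → F defined by T(y,z) = Σ_{a∈A} c_a (δ_a(y)δ_a(z) + (1−δ_a(y))(1−δ_a(z))) can be written as Σ_{i=1}^s f_i(y) g_i(z) for functions f_i, g_i : A → F, then s ≥ m − 2. -/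
open Matrix FiniteDimensional

lemma myRankAddLe {n : Type*} [Fintype n] [DecidableEq n] {F : Type*} [Field F]
    (M N : Matrix n n F) : (M + N).rank ≤ M.rank + N.rank := by
  classical
  have hr : LinearMap.range (M + N).mulVecLin ≤
      LinearMap.range M.mulVecLin ⊔ LinearMap.range N.mulVecLin := by
    rintro x ⟨v, rfl⟩
    simp only [Matrix.mulVecLin_apply, Matrix.add_mulVec]
    exact Submodule.add_mem_sup ⟨v, rfl⟩ ⟨v, rfl⟩
  calc (M + N).rank ≤ Module.finrank F
        (LinearMap.range M.mulVecLin ⊔ LinearMap.range N.mulVecLin : Submodule F (n → F)) :=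
        Submodule.finrank_mono hr
    _ ≤ M.rank + N.rank := Submodule.finrank_add_le_finrank_add_finrank _ _

lemma myRankVecMulVec {n : Type*} [Fintype n] [DecidableEq n] {F : Type*} [Field F]
    (w v : n → F) : (Matrix.vecMulVec w v).rank ≤ 1 := by
  rw [Matrix.vecMulVec_eq (Fin 1)]
  calc (Matrix.replicateCol (Fin 1) w * Matrix.replicateRow (Fin 1) v).rank ≤ (Matrix.replicateRow (Fin 1) v).rank :=
        Matrix.rank_mul_le_right _ _
    _ ≤ Fintype.card (Fin 1) := Matrix.rank_le_card_height _
    _ = 1 := by simp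

lemma myRankSumLe {n : Type*} [Fintype n] [DecidableEq n] {F : Type*} [Field F]
    {ι : Type*} (t : Finset ι) (M : ι → Matrix n n F) :
    (∑ i ∈ t, M i).rank ≤ ∑ i ∈ t, (M i).rank := by
  classical
  induction t using Finset.induction with
  | empty => simp [Matrix.rank_zero]
  | insert _ _ h ih =>
    rw [Finset.sum_insert h, Finset.sum_insert h]
    exact (myRankAddLe _ _).trans (Nat.add_le_add_left ih _)

theorem stmt2 (A : Type*) [Fintype A] [DecidableEq A] (m : ℕ) (hm : Fintype.card A = m)
    (F : Type*) [Field F] (hodd : Odd (ringChar F))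
    (c : A → F) (hc : ∀ a, c a ≠ 0)
    (s : ℕ) (f g : Fin s → A → F)
    (hdec : ∀ y z : A,
      (∑ a : A, c a * ((if y = a then (1:F) else 0) * (if z = a then 1 else 0) +
        (1 - if y = a then (1:F) else 0) * (1 - if z = a then (1:F) else 0))) =
      ∑ i : Fin s, f i y * g i z) :
    m - 2 ≤ s := by
  classical
  set S : F := ∑ a : A, c a with hS
  -- key entrywise identity
  have key : ∀ y z : A,
      (∑ a : A, c a * ((if y = a then (1:F) else 0) * (if z = a then 1 else 0) +
        (1 - if y = a then (1:F) else 0) * (1 - if z = a then (1:F) else 0))) =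
      S - c y - c z + (if y = z then 2 * c y else 0) := by
    intro y z
    have h1 : (∑ a : A, c a * ((if y = a then (1:F) else 0) * (if z = a then 1 else 0) +
        (1 - if y = a then (1:F) else 0) * (1 - if z = a then (1:F) else 0))) =
        ∑ a : A, (c a - (if y = a then c a else 0) - (if z = a then c a else 0)
          + (if y = a then (if z = a then 2 * c a else 0) else 0)) := by
      apply Finset.sum_congr rfl
      intro a _
      split_ifs <;> ring
    rw [h1]
    simp only [Finset.sum_add_distrib, Finset.sum_sub_distrib, Finset.sum_ite_eq,
      Finset.mem_univ, if_true]
    congr 1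
    by_cases hyz : y = z
    · subst hyz; simp
    · rw [if_neg hyz, if_neg (fun h => hyz h.symm)]
  -- the two-ne-zero fact
  have h2 : (2 : F) ≠ 0 := by
    apply Ring.two_ne_zero
    intro h
    rw [h] at hodd
    exact (Nat.not_odd_iff_even.mpr (by norm_num)) hodd
  -- diagonal matrix identity
  have hD : (Matrix.diagonal (fun a => 2 * c a) : Matrix A A F) =
      (∑ i : Fin s, Matrix.vecMulVec (f i) (g i)) +
      Matrix.vecMulVec (fun y => c y - S) (fun _ => 1) +
      Matrix.vecMulVec (fun _ => 1) c := by
    ext y z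
    have := (hdec y z).symm.trans (key y z)
    simp only [Matrix.add_apply, Matrix.sum_apply, Matrix.vecMulVec_apply, Matrix.diagonal_apply]
    rw [this]
    by_cases hyz : y = z <;> simp [hyz] <;> ring
  -- ranks
  have hrank : (Matrix.diagonal (fun a => 2 * c a) : Matrix A A F).rank = m := by
    rw [Matrix.rank_diagonal, ← hm]
    apply Fintype.card_congr
    exact Equiv.subtypeUnivEquiv (fun a => mul_ne_zero h2 (hc a))
  have hle : (Matrix.diagonal (fun a => 2 * c a) : Matrix A A F).rank ≤ s + 1 + 1 := by
    rw [hD]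
    refine (myRankAddLe _ _).trans (Nat.add_le_add ?_ (myRankVecMulVec _ _))
    refine (myRankAddLe _ _).trans (Nat.add_le_add ?_ (myRankVecMulVec _ _))
    calc (∑ i : Fin s, Matrix.vecMulVec (f i) (g i)).rank
        ≤ ∑ i : Fin s, (Matrix.vecMulVec (f i) (g i)).rank := myRankSumLe _ _
      _ ≤ ∑ _i : Fin s, 1 := Finset.sum_le_sum (fun i _ => myRankVecMulVec _ _)
      _ = s := by simp
  rw [hrank] at hle
  omega
end

section
/- Let A be a finite set, F a field, and H a linear subspace of functions A → F with dim_F H = d. Then there exists a subset A' ⊆ A with |A'| = d and a function h ∈ H such that h(a) ≠ 0 for every a ∈ A'. -/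
theorem stmt4 (A : Type*) [Fintype A] [DecidableEq A] (F : Type*) [Field F]
    (H : Submodule F (A → F)) (d : ℕ) (hd : Module.finrank F H = d) :
    ∃ A' : Finset A, A'.card = d ∧ ∃ h ∈ H, ∀ a ∈ A', h a ≠ 0 := by
  classical
  set f : (A → F) → ℕ := fun x => (Finset.univ.filter (fun a => x a ≠ 0)).card with hf
  -- the set of achievable support cardinalities, as a finset
  set T : Finset ℕ := (Finset.range (Fintype.card A + 1)).filter (fun n => ∃ x ∈ H, f x = n)
    with hT
  have hfle : ∀ x : A → F, f x ≤ Fintype.card A := fun x => Finset.card_filter_le _ _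
  have hTne : T.Nonempty := by
    refine ⟨f 0, ?_⟩
    simp only [hT, Finset.mem_filter, Finset.mem_range]
    exact ⟨Nat.lt_succ_of_le (hfle 0), 0, H.zero_mem, rfl⟩
  set n := T.max' hTne with hn
  obtain ⟨h, hH, hfh⟩ : ∃ x ∈ H, f x = n := by
    have := T.max'_mem hTne
    simp only [hT, Finset.mem_filter] at this
    exact this.2
  have hmax : ∀ x ∈ H, f x ≤ n := by
    intro x hx
    refine T.le_max' _ ?_
    simp only [hT, Finset.mem_filter, Finset.mem_range]
    exact ⟨Nat.lt_succ_of_le (hfle x), x, hx, rfl⟩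
  set S : Finset A := Finset.univ.filter (fun a => h a ≠ 0) with hS
  have hSn : S.card = n := hfh
  have hdn : d ≤ n := by
    by_contra hlt
    push_neg at hlt
    -- evaluation map on S
    set φ : H →ₗ[F] ({ a // a ∈ S } → F) :=
      (LinearMap.funLeft F F (Subtype.val)).comp H.subtype with hφ
    have hker : LinearMap.ker φ ≠ ⊥ := by
      intro hk
      have hinj : Function.Injective φ := LinearMap.ker_eq_bot.mp hk
      have h1 : Module.finrank F H ≤ Module.finrank F ({ a // a ∈ S } → F) :=
        LinearMap.finrank_le_finrank_of_injective hinj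
      rw [hd, Module.finrank_pi, Fintype.card_coe, hSn] at h1
      omega
    obtain ⟨g, hg, hg0⟩ := Submodule.exists_mem_ne_zero_of_ne_bot hker
    have hgS : ∀ a ∈ S, (g : A → F) a = 0 := by
      intro a ha
      have := LinearMap.mem_ker.mp hg
      have := congrFun this ⟨a, ha⟩
      simpa [hφ] using this
    have hg0' : (g : A → F) ≠ 0 := fun h0 => hg0 (Subtype.ext h0)
    obtain ⟨a, ha⟩ : ∃ a, (g : A → F) a ≠ 0 := by
      by_contra hc
      push_neg at hc
      exact hg0' (funext hc)
    have haS : a ∉ S := fun haS => ha (hgS a haS)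
    -- the element h + g has strictly larger support
    have hxmem : h + (g : A → F) ∈ H := H.add_mem hH g.2
    have hsub : insert a S ⊆ Finset.univ.filter (fun b => (h + (g : A → F)) b ≠ 0) := by
      intro b hb
      simp only [Finset.mem_insert] at hb
      simp only [Finset.mem_filter, Finset.mem_univ, true_and, Pi.add_apply]
      rcases hb with rfl | hbS
      · have hha : h b = 0 := by
          by_contra hh
          exact haS (Finset.mem_filter.mpr ⟨Finset.mem_univ _, hh⟩)
        simpa [hha] using ha
      · have := (Finset.mem_filter.mp hbS).2
        rw [hgS b hbS, add_zero]
        exact this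
    have hcard : n + 1 ≤ f (h + (g : A → F)) := by
      calc n + 1 = (insert a S).card := by rw [Finset.card_insert_of_notMem haS, hSn]
        _ ≤ _ := Finset.card_le_card hsub
    have := hmax _ hxmem
    omega
  obtain ⟨A', hsub, hcard⟩ := S.exists_subset_card_eq (n := d) (by omega)
  refine ⟨A', hcard, h, hH, fun a ha => ?_⟩
  exact (Finset.mem_filter.mp (hsub ha)).2
end

section
/- Let A be a finite set of size m and F a field of odd characteristic, with nonzero coefficients c_a ∈ F. Suppose the function T : A × A × A → F defined by T(x,y,z) = Σ_{a∈A} c_a (δ_a(y)δ_a(z) + (1−δ_a(y))(1−δ_a(z))) δ_a(x) can be written as Σ_{α∈I₁} f_α(x) g_α(y,z) + Σ_{β∈I₂} f_β(y) g_β(x,z) + Σ_{γ∈I₃} f_γ(z) g_γ(x,y) for finite index sets I₁, I₂, I₃ and functions f : A → F, g : A × A → F. Then |I₁| + |I₂| + |I₃| ≥ m − 2. -/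
open Matrix Finset

lemma myrank_add_le {m F : Type*} [Fintype m] [Field F] (M N : Matrix m m F) :
    (M + N).rank ≤ M.rank + N.rank := by
  classical
  unfold Matrix.rank
  rw [Matrix.mulVecLin_add]
  refine le_trans (Submodule.finrank_mono ?_)
    (Submodule.finrank_add_le_finrank_add_finrank _ _)
  rintro x ⟨v, rfl⟩
  exact Submodule.add_mem_sup ⟨v, rfl⟩ ⟨v, rfl⟩

lemma myrank_sum_le {m F ι : Type*} [Fintype m] [Field F] (s : Finset ι)
    (M : ι → Matrix m m F) : (∑ i ∈ s, M i).rank ≤ ∑ i ∈ s, (M i).rank := by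
  classical
  induction s using Finset.induction with
  | empty => simp [Matrix.rank_zero]
  | insert _ _ hx ih =>
      rw [Finset.sum_insert hx, Finset.sum_insert hx]
      exact le_trans (myrank_add_le _ _) (by omega)

lemma myrank_vmv {m F : Type*} [Fintype m] [Field F] (w v : m → F) :
    (vecMulVec w v).rank ≤ 1 := by
  rw [vecMulVec_eq Unit]
  exact le_trans (Matrix.rank_mul_le_left _ _)
    (le_trans (Matrix.rank_le_card_width _) (by simp))

lemma exists_large_support {A F : Type*} [Fintype A] [DecidableEq A] [Field F]
    (k : ℕ) (Φ : (A → F) →ₗ[F] (Fin k → F)) :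
    ∃ (h : A → F) (B : Finset A), Φ h = 0 ∧ B.card ≤ k ∧ ∀ a ∉ B, h a ≠ 0 := by
  classical
  cases isEmpty_or_nonempty A with
  | inl hA => exact ⟨0, ∅, map_zero Φ, by simp, fun a _ => absurd (IsEmpty.false a) not_false⟩
  | inr hA =>
  set col : A → (Fin k → F) := fun a => Φ (Pi.single a 1) with hcol
  obtain ⟨s, hsub, hspan, hli⟩ := exists_linearIndependent F (Set.range col)
  have hfin : s.Finite := (Set.finite_range col).subset hsub
  haveI : Fintype s := hfin.fintype
  have hcard : s.toFinset.card ≤ k := by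
    have h1 : Module.finrank F (Submodule.span F s) = s.toFinset.card :=
      finrank_span_set_eq_card hli
    have h2 : Module.finrank F (Submodule.span F s) ≤ Module.finrank F (Fin k → F) :=
      Submodule.finrank_le _
    rw [h1, Module.finrank_fin_fun] at h2
    exact h2
  -- section
  have hex : ∀ v ∈ s.toFinset, ∃ a, col a = v := by
    intro v hv
    exact hsub (Set.mem_toFinset.mp hv)
  set t : (Fin k → F) → A := fun v => if hv : ∃ a, col a = v then hv.choose
    else Classical.arbitrary A with ht
  have htcol : ∀ v ∈ s.toFinset, col (t v) = v := by
    intro v hv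
    have h := hex v hv
    simp only [ht, dif_pos h]
    exact h.choose_spec
  set B : Finset A := s.toFinset.image t with hB
  have hBcard : B.card ≤ k := le_trans (Finset.card_image_le) hcard
  -- the target vector
  set w : Fin k → F := ∑ a ∈ Finset.univ \ B, col a with hw
  have hwmem : w ∈ Submodule.span F (s.toFinset : Set (Fin k → F)) := by
    rw [Set.coe_toFinset, hspan]
    exact Submodule.sum_mem _ fun a _ => Submodule.subset_span ⟨a, rfl⟩
  obtain ⟨u, -, hu⟩ := Submodule.mem_span_finset.mp hwmem
  refine ⟨fun a => if a ∈ B then -(u (col a)) else 1, B, ?_, hBcard, ?_⟩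
  · -- Φ h = 0
    have hrep : (fun a => if a ∈ B then -(u (col a)) else 1)
        = ∑ a : A, (Pi.single a (if a ∈ B then -(u (col a)) else (1:F)) : A → F) := by
      rw [Finset.univ_sum_single]
    have hsingle : ∀ (a : A) (v : F), Φ (Pi.single a v) = v • col a := by
      intro a v
      have hv : (Pi.single a v : A → F) = v • (Pi.single a 1 : A → F) := by
        ext b; simp [Pi.single_apply]
      rw [hv, LinearMap.map_smul, hcol]
    rw [hrep, map_sum]
    simp_rw [hsingle]
    simp_rw [ite_smul]
    rw [← Finset.sum_filter_add_sum_filter_not Finset.univ (fun a => a ∈ B)]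
    have e1 : ∀ a ∈ Finset.univ.filter (fun a => a ∈ B),
        (if a ∈ B then -(u (col a)) • col a else (1:F) • col a) = -(u (col a) • col a) := by
      intro a ha
      simp only [Finset.mem_filter] at ha
      rw [if_pos ha.2, neg_smul]
    have e2 : ∀ a ∈ Finset.univ.filter (fun a => ¬ a ∈ B),
        (if a ∈ B then -(u (col a)) • col a else (1:F) • col a) = col a := by
      intro a ha
      simp only [Finset.mem_filter] at ha
      rw [if_neg ha.2, one_smul]
    rw [Finset.sum_congr rfl e1, Finset.sum_congr rfl e2]
    have hfilt : Finset.univ.filter (fun a => a ∈ B) = B := by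
      ext a; simp
    have hfilt2 : Finset.univ.filter (fun a => ¬ a ∈ B) = Finset.univ \ B := by
      ext a; simp
    rw [hfilt, hfilt2, ← hw, Finset.sum_neg_distrib]
    have hinj : ∀ x ∈ s.toFinset, ∀ y ∈ s.toFinset, t x = t y → x = y := by
      intro x hx y hy hxy
      rw [← htcol x hx, ← htcol y hy, hxy]
    have : ∑ a ∈ B, u (col a) • col a = ∑ v ∈ s.toFinset, u v • v := by
      rw [hB, Finset.sum_image hinj]
      exact Finset.sum_congr rfl fun v hv => by rw [htcol v hv]
    rw [this, hu]
    simp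
  · -- support
    intro a ha
    simp [ha]

theorem stmt5 (A : Type*) [Fintype A] [DecidableEq A] (m : ℕ) (hm : Fintype.card A = m)
    (F : Type*) [Field F] (hodd : Odd (ringChar F))
    (c : A → F) (hc : ∀ a, c a ≠ 0)
    (r₁ r₂ r₃ : ℕ)
    (f₁ : Fin r₁ → A → F) (g₁ : Fin r₁ → A × A → F)
    (f₂ : Fin r₂ → A → F) (g₂ : Fin r₂ → A × A → F)
    (f₃ : Fin r₃ → A → F) (g₃ : Fin r₃ → A × A → F)
    (hdec : ∀ x y z : A,
      (∑ a : A, c a * ((if y = a then (1:F) else 0) * (if z = a then 1 else 0) +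
          (1 - if y = a then (1:F) else 0) * (1 - if z = a then (1:F) else 0)) *
        (if x = a then (1:F) else 0)) =
      (∑ α : Fin r₁, f₁ α x * g₁ α (y, z)) + (∑ β : Fin r₂, f₂ β y * g₂ β (x, z)) +
        (∑ γ : Fin r₃, f₃ γ z * g₃ γ (x, y))) :
    m - 2 ≤ r₁ + r₂ + r₃ := by
  classical
  subst hm
  have h2 : (2:F) ≠ 0 := by
    apply Ring.two_ne_zero
    intro hch
    rw [hch] at hodd
    exact (by decide : ¬ Odd 2) hodd
  -- the linear functionals to annihilate
  let pairL : (A → F) → ((A → F) →ₗ[F] F) := fun w =>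
    { toFun := fun h => ∑ z, h z * w z
      map_add' := fun h k => by simp [add_mul, Finset.sum_add_distrib]
      map_smul' := fun t h => by simp [Finset.mul_sum, mul_assoc] }
  let Φ : (A → F) →ₗ[F] (Fin (r₃+1) → F) :=
    LinearMap.pi (fun i => pairL (if hi : (i : ℕ) < r₃ then f₃ ⟨i, hi⟩ else fun _ => 1))
  obtain ⟨h, B, hΦ, hBcard, hBsupp⟩ := exists_large_support (r₃+1) Φ
  have hC1 : ∀ γ : Fin r₃, ∑ z, h z * f₃ γ z = 0 := by
    intro γ
    have hg := congrFun hΦ ⟨γ.1, by omega⟩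
    have hlt : ((⟨γ.1, by omega⟩ : Fin (r₃+1)) : ℕ) < r₃ := γ.2
    simpa [Φ, pairL, LinearMap.pi_apply, dif_pos hlt] using hg
  have hC2 : (∑ z, h z) = 0 := by
    have hg := congrFun hΦ ⟨r₃, by omega⟩
    have hlt : ¬ ((⟨r₃, by omega⟩ : Fin (r₃+1)) : ℕ) < r₃ := by simp
    simpa [Φ, pairL, LinearMap.pi_apply, dif_neg hlt] using hg
  -- the matrix
  set G₁ : Fin r₁ → A → F := fun α y => ∑ z, h z * g₁ α (y, z) with hG₁
  set H₂ : Fin r₂ → A → F := fun β x => ∑ z, h z * g₂ β (x, z) with hH₂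
  set M : Matrix A A F :=
    (∑ α : Fin r₁, Matrix.vecMulVec (f₁ α) (G₁ α)) +
    (∑ β : Fin r₂, Matrix.vecMulVec (H₂ β) (f₂ β)) with hM
  have key : ∀ x y, M x y = c x * h x * (2 * (if y = x then (1:F) else 0) - 1) := by
    intro x y
    have swap1 : ∑ z, h z * (∑ α : Fin r₁, f₁ α x * g₁ α (y, z))
        = ∑ α : Fin r₁, f₁ α x * G₁ α y := by
      simp_rw [Finset.mul_sum]
      rw [Finset.sum_comm]
      refine Finset.sum_congr rfl fun α _ => ?_
      rw [hG₁, Finset.mul_sum]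
      exact Finset.sum_congr rfl fun z _ => by ring
    have swap2 : ∑ z, h z * (∑ β : Fin r₂, f₂ β y * g₂ β (x, z))
        = ∑ β : Fin r₂, H₂ β x * f₂ β y := by
      simp_rw [Finset.mul_sum]
      rw [Finset.sum_comm]
      refine Finset.sum_congr rfl fun β _ => ?_
      rw [hH₂, Finset.sum_mul]
      exact Finset.sum_congr rfl fun z _ => by ring
    have swap3 : ∑ z, h z * (∑ γ : Fin r₃, f₃ γ z * g₃ γ (x, y)) = 0 := by
      simp_rw [Finset.mul_sum]
      rw [Finset.sum_comm]
      have e : ∀ γ : Fin r₃, ∑ z, h z * (f₃ γ z * g₃ γ (x, y))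
          = (∑ z, h z * f₃ γ z) * g₃ γ (x, y) := by
        intro γ
        rw [Finset.sum_mul]
        exact Finset.sum_congr rfl fun z _ => by ring
      rw [Finset.sum_congr rfl fun γ _ => e γ]
      simp [hC1]
    have e0 : M x y = ∑ z, h z * ((∑ α : Fin r₁, f₁ α x * g₁ α (y, z))
        + (∑ β : Fin r₂, f₂ β y * g₂ β (x, z)) + (∑ γ : Fin r₃, f₃ γ z * g₃ γ (x, y))) := by
      simp only [mul_add, Finset.sum_add_distrib, swap1, swap2, swap3, add_zero]
      simp [hM, Matrix.sum_apply, Matrix.vecMulVec_apply]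
    rw [e0]
    have e1 : ∀ z, ((∑ α : Fin r₁, f₁ α x * g₁ α (y, z))
        + (∑ β : Fin r₂, f₂ β y * g₂ β (x, z)) + (∑ γ : Fin r₃, f₃ γ z * g₃ γ (x, y)))
        = c x * ((if y = x then (1:F) else 0) * (if z = x then 1 else 0) +
          (1 - if y = x then (1:F) else 0) * (1 - if z = x then (1:F) else 0)) := by
      intro z
      rw [← hdec x y z]
      simp only [mul_ite, mul_one, mul_zero]
      rw [Finset.sum_ite_eq]
      simp
    rw [Finset.sum_congr rfl fun z _ => by rw [e1 z]]
    have e2 : ∀ z, h z * (c x * ((if y = x then (1:F) else 0) * (if z = x then 1 else 0) +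
          (1 - if y = x then (1:F) else 0) * (1 - if z = x then (1:F) else 0)))
        = c x * ((2 * (if y = x then (1:F) else 0) - 1) * (h z * (if z = x then (1:F) else 0)))
          + c x * ((1 - (if y = x then (1:F) else 0)) * h z) := by
      intro z
      ring
    rw [Finset.sum_congr rfl fun z _ => e2 z, Finset.sum_add_distrib,
      ← Finset.mul_sum, ← Finset.mul_sum, ← Finset.mul_sum, ← Finset.mul_sum]
    have hsum1 : ∑ z, h z * (if z = x then (1:F) else 0) = h x := by
      simp [mul_ite, Finset.sum_ite_eq']
    rw [hsum1, hC2]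
    ring
  -- diagonal identity
  have hDiag : Matrix.diagonal (fun x => 2 * c x * h x)
      = M + Matrix.vecMulVec (fun x => c x * h x) (fun _ => (1:F)) := by
    ext x y
    rw [Matrix.add_apply, Matrix.vecMulVec_apply, key x y]
    by_cases hxy : x = y
    · subst hxy
      simp only [Matrix.diagonal_apply_eq, if_pos rfl, ite_true, eq_self_iff_true]
      ring
    · rw [Matrix.diagonal_apply_ne _ hxy, if_neg (Ne.symm hxy)]
      ring
  -- rank bounds
  have hr : (Matrix.diagonal (fun x => 2 * c x * h x)).rank ≤ r₁ + r₂ + 1 := by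
    rw [hDiag]
    refine le_trans (myrank_add_le _ _) ?_
    have b1 : (∑ α : Fin r₁, Matrix.vecMulVec (f₁ α) (G₁ α)).rank ≤ r₁ := by
      refine le_trans (myrank_sum_le _ _) ?_
      calc ∑ α : Fin r₁, (Matrix.vecMulVec (f₁ α) (G₁ α)).rank
          ≤ ∑ _α : Fin r₁, 1 := Finset.sum_le_sum fun α _ => myrank_vmv _ _
        _ = r₁ := by simp
    have b2 : (∑ β : Fin r₂, Matrix.vecMulVec (H₂ β) (f₂ β)).rank ≤ r₂ := by
      refine le_trans (myrank_sum_le _ _) ?_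
      calc ∑ β : Fin r₂, (Matrix.vecMulVec (H₂ β) (f₂ β)).rank
          ≤ ∑ _β : Fin r₂, 1 := Finset.sum_le_sum fun β _ => myrank_vmv _ _
        _ = r₂ := by simp
    have hMrank : M.rank ≤ r₁ + r₂ := le_trans (myrank_add_le _ _) (by omega)
    have hN : (Matrix.vecMulVec (fun x => c x * h x) (fun _ => (1:F))).rank ≤ 1 :=
      myrank_vmv _ _
    omega
  have hdrank : (Matrix.diagonal (fun x => 2 * c x * h x)).rank
      = (Finset.univ.filter fun a => 2 * c a * h a ≠ 0).card := by
    rw [Matrix.rank_diagonal, Fintype.card_subtype]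
  have hcount : (Finset.univ.filter fun a => 2 * c a * h a ≠ 0).card ≤ r₁ + r₂ + 1 := by
    rw [← hdrank]; exact hr
  have hsubB : Finset.univ \ B ⊆ Finset.univ.filter fun a => 2 * c a * h a ≠ 0 := by
    intro a ha
    simp only [Finset.mem_sdiff, Finset.mem_univ, true_and] at ha
    simp only [Finset.mem_filter, Finset.mem_univ, true_and]
    exact mul_ne_zero (mul_ne_zero h2 (hc a)) (hBsupp a ha)
  have hcards : Fintype.card A - B.card ≤ (Finset.univ \ B).card := by
    rw [Finset.card_sdiff_of_subset (Finset.subset_univ B), Finset.card_univ]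
  have := Finset.card_le_card hsubB
  omega
end

section
/- Let q be an odd prime power and n ≥ 1. If A ⊆ F_q^n contains no three distinct elements x, y, z with ⟨z−x, y−x⟩ = 0 (standard bilinear form), then |A| ≤ C(n+q, q−1) + 3. -/
open Finset Submodule Module


lemma myTupleCard (k N : ℕ) :
    (Finset.Nat.antidiagonalTuple k N).card ≤ (k + N - 1).choose N := by
  classical
  have key : ∀ (d : Fin k → ℕ) (j : Fin k),
      Multiset.count j (Finset.univ.val.bind fun i => Multiset.replicate (d i) i) = d j := by
    intro d j
    rw [Multiset.count_bind]
    have h : (Finset.univ.val.map fun i => Multiset.count j (Multiset.replicate (d i) i)).sum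
        = ∑ i : Fin k, Multiset.count j (Multiset.replicate (d i) i) := rfl
    rw [h]
    simp [Multiset.count_replicate]
  have h2 : Fintype.card (Sym (Fin k) N) = (k + N - 1).choose N := by
    rw [Sym.card_sym_eq_multichoose, Fintype.card_fin, Nat.multichoose_eq]
  rw [← Fintype.card_coe, ← h2]
  have hcard : ∀ d : ↥(Finset.Nat.antidiagonalTuple k N),
      Multiset.card (Finset.univ.val.bind fun i => Multiset.replicate (d.1 i) i) = N := by
    rintro ⟨d, hd⟩
    have hd' := Finset.Nat.mem_antidiagonalTuple.mp hd
    simp only [Multiset.card_bind, Multiset.map_map, Function.comp,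
      Multiset.card_replicate]
    exact hd'
  let f : ↥(Finset.Nat.antidiagonalTuple k N) → Sym (Fin k) N :=
    fun d => ⟨Finset.univ.val.bind fun i => Multiset.replicate (d.1 i) i, hcard d⟩
  have hf : Function.Injective f := by
    rintro ⟨d, hd⟩ ⟨e, he⟩ h
    have h' : (Finset.univ.val.bind fun i => Multiset.replicate (d i) i)
        = (Finset.univ.val.bind fun i => Multiset.replicate (e i) i) := by
      simpa [f, Sym] using congrArg Subtype.val h
    ext1
    funext j
    show d j = e j
    rw [← key d j, ← key e j, h']
  exact Fintype.card_le_of_injective f hf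

lemma mySpanCard {F : Type*} [Field F] {β : Type*} [Fintype β] [DecidableEq β]
    (s : Finset (β → F))
    (h : ∀ b : β, (Pi.single b 1 : β → F) ∈ Submodule.span F (s : Set (β → F))) :
    Fintype.card β ≤ s.card := by
  have h1 : (⊤ : Submodule F (β → F)) ≤ Submodule.span F (s : Set (β → F)) := by
    rw [← (Pi.basisFun F β).span_eq, Submodule.span_le]
    rintro _ ⟨b, rfl⟩
    simpa [Pi.basisFun_apply] using h b
  calc Fintype.card β = Module.finrank F (β → F) := (Module.finrank_fintype_fun_eq_card F).symm
    _ = Module.finrank F (⊤ : Submodule F (β → F)) := (finrank_top F _).symm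
    _ ≤ Module.finrank F (Submodule.span F (s : Set (β → F))) := Submodule.finrank_mono h1
    _ ≤ s.card := finrank_span_finset_le_card s

lemma myMain {F : Type*} [Field F] [Fintype F] {n : ℕ} (B : Finset (Fin n → F))
    (o : Fin n → F)
    (hB : ∀ a ∈ B, ∀ b ∈ B, a ≠ b → ∑ i, (b i - a i) * (o i - a i) ≠ 0) :
    B.card ≤ (n + (Fintype.card F - 1)).choose (Fintype.card F - 1) := by
  classical
  set N := Fintype.card F - 1 with hNdef
  have hN0 : N ≠ 0 := by
    have := Fintype.one_lt_card (α := F)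
    omega
  -- the space of monomials of degree at most k, as functions on B
  set Mon : ℕ → Set (↥B → F) := fun k =>
    {f | ∃ d : Fin n → ℕ, (∑ i, d i) ≤ k ∧ f = fun b : ↥B => ∏ i, (b : Fin n → F) i ^ d i}
    with hMon
  set V : ℕ → Submodule F (↥B → F) := fun k => Submodule.span F (Mon k) with hV
  have hone : ∀ k, (fun _ : ↥B => (1 : F)) ∈ Mon k := by
    intro k
    exact ⟨fun _ => 0, by simp, by funext b; simp⟩
  have hmul : ∀ j k : ℕ, ∀ f g : ↥B → F, f ∈ V j → g ∈ V k → f * g ∈ V (j + k) := by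
    intro j k f g hf hg
    have h1 : f * g ∈ V j * V k := Submodule.mul_mem_mul hf hg
    rw [hV] at h1 ⊢
    rw [Submodule.span_mul_span] at h1
    refine Submodule.span_mono ?_ h1
    rw [Set.mul_subset_iff]
    rintro x ⟨d, hd, rfl⟩ y ⟨e, he, rfl⟩
    refine ⟨d + e, ?_, ?_⟩
    · calc ∑ i, (d + e) i = ∑ i, (d i + e i) := rfl
        _ = (∑ i, d i) + ∑ i, e i := Finset.sum_add_distrib
        _ ≤ j + k := add_le_add hd he
    · funext b
      simp [pow_add, Finset.prod_mul_distrib]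
  have hpow : ∀ (k : ℕ) (L : ↥B → F), L ∈ V 1 → L ^ k ∈ V k := by
    intro k L hL
    induction k with
    | zero => exact Submodule.subset_span (by rw [pow_zero]; exact hone 0)
    | succ m ih =>
        have := hmul m 1 (L ^ m) L ih hL
        rwa [pow_succ]
  have hproj : ∀ i : Fin n, (fun b : ↥B => (b : Fin n → F) i) ∈ Mon 1 := by
    intro i
    refine ⟨Pi.single i 1, by simp, ?_⟩
    funext b
    rw [Finset.prod_eq_single i]
    · simp
    · intro j _ hj
      simp [Pi.single_apply, hj]
    · simp
  have hV1 : ∀ a : Fin n → F,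
      (fun b : ↥B => ∑ i, ((b : Fin n → F) i - a i) * (o i - a i)) ∈ V 1 := by
    intro a
    have heq : (fun b : ↥B => ∑ i, ((b : Fin n → F) i - a i) * (o i - a i))
        = (∑ i : Fin n, (o i - a i) • (fun b : ↥B => (b : Fin n → F) i))
          + (∑ i, (- a i) * (o i - a i)) • (fun _ : ↥B => (1 : F)) := by
      funext b
      simp only [Pi.add_apply, Finset.sum_apply, Pi.smul_apply, smul_eq_mul, mul_one]
      rw [← Finset.sum_add_distrib]
      exact Finset.sum_congr rfl fun i _ => by ring
    rw [heq]
    refine Submodule.add_mem _ ?_ ?_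
    · exact Submodule.sum_mem _ fun i _ =>
        Submodule.smul_mem _ _ (Submodule.subset_span (hproj i))
    · exact Submodule.smul_mem _ _ (Submodule.subset_span (hone 1))
  have hdelta : ∀ a : ↥B, (Pi.single a 1 : ↥B → F) ∈ V N := by
    intro a
    have hL := hV1 (a : Fin n → F)
    have heq : (Pi.single a 1 : ↥B → F)
        = (fun _ : ↥B => (1 : F))
          - (fun b : ↥B => ∑ i, ((b : Fin n → F) i - (a : Fin n → F) i)
              * (o i - (a : Fin n → F) i)) ^ N := by
      funext b
      by_cases hba : b = a
      · subst hba
        simp [Pi.single_apply, zero_pow hN0]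
      · have hne : (a : Fin n → F) ≠ (b : Fin n → F) :=
          fun h => hba (Subtype.coe_injective h.symm)
        have hu : (∑ i, ((b : Fin n → F) i - (a : Fin n → F) i)
            * (o i - (a : Fin n → F) i)) ≠ 0 := hB _ a.2 _ b.2 hne
        have : (∑ i, ((b : Fin n → F) i - (a : Fin n → F) i)
            * (o i - (a : Fin n → F) i)) ^ N = 1 := by
          rw [hNdef]
          exact FiniteField.pow_card_sub_one_eq_one _ hu
        simp [Pi.single_apply, hba, Pi.pow_apply, this]
    rw [heq]
    exact Submodule.sub_mem _ (Submodule.subset_span (hone N)) (hpow N _ hL)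
  -- the finite set of monomials
  set S : Finset (↥B → F) := (Finset.Nat.antidiagonalTuple (n + 1) N).image
      (fun d => fun b : ↥B => ∏ i : Fin n, (b : Fin n → F) i ^ d i.castSucc) with hS
  have hMonS : Mon N ⊆ ↑S := by
    rintro f ⟨d, hd, rfl⟩
    refine Finset.mem_coe.2 (Finset.mem_image.2 ⟨Fin.snoc d (N - ∑ i, d i), ?_, ?_⟩)
    · rw [Finset.Nat.mem_antidiagonalTuple, Fin.sum_univ_castSucc]
      simp only [Fin.snoc_castSucc, Fin.snoc_last]
      omega
    · funext b
      refine Finset.prod_congr rfl fun i _ => ?_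
      rw [Fin.snoc_castSucc]
  have hsingle : ∀ b : ↥B, (Pi.single b 1 : ↥B → F) ∈ Submodule.span F (S : Set (↥B → F)) :=
    fun b => Submodule.span_mono hMonS (hdelta b)
  have hcard : Fintype.card ↥B ≤ S.card := mySpanCard S hsingle
  have h1 : S.card ≤ (n + 1 + N - 1).choose N :=
    le_trans (Finset.card_image_le) (myTupleCard _ _)
  have h2 : n + 1 + N - 1 = n + N := by omega
  rw [← Fintype.card_coe]
  exact le_trans hcard (by rw [h2] at h1; exact h1)

theorem stmt8 (q n : ℕ) (hn : 1 ≤ n) (F : Type*) [Field F] [Fintype F]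
    (hq : Fintype.card F = q) (hodd : Odd q) (A : Finset (Fin n → F))
    (hA : ∀ x ∈ A, ∀ y ∈ A, ∀ z ∈ A, x ≠ y → x ≠ z → y ≠ z →
      ∑ i, (z i - x i) * (y i - x i) ≠ 0) :
    A.card ≤ (n + q).choose (q - 1) + 3 := by
  classical
  rcases A.eq_empty_or_nonempty with rfl | ⟨o, ho⟩
  · simp
  set B := A.erase o with hBdef
  have hB : ∀ a ∈ B, ∀ b ∈ B, a ≠ b → ∑ i, (b i - a i) * (o i - a i) ≠ 0 := by
    intro a ha b hb hab
    have haA : a ∈ A := Finset.mem_of_mem_erase ha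
    have hbA : b ∈ A := Finset.mem_of_mem_erase hb
    have hao : a ≠ o := Finset.ne_of_mem_erase ha
    have hbo : b ≠ o := Finset.ne_of_mem_erase hb
    exact hA a haA o ho b hbA hao hab (Ne.symm hbo)
  have hmain := myMain B o hB
  rw [hq] at hmain
  have h1 : B.card ≤ (n + q).choose (q - 1) := by
    refine le_trans hmain (Nat.choose_le_choose _ ?_)
    have hq2 : 2 ≤ q := by
      rw [← hq]; exact Fintype.one_lt_card
    omega
  have h2 : B.card + 1 = A.card := Finset.card_erase_add_one ho
  omega
end

section
/- Let F be a field, A a finite set, and suppose a function T : A × A × A → F can be written as a sum of r functions, each of which is of one of the forms f(x)g(y,z), f(y)g(x,z), or f(z)g(x,y). Let h : A → F satisfy Σ_{x∈A} f_α(x) h(x) = 0 for every function f_α appearing in a term of the first form. Then the two-variable function (y,z) ↦ Σ_{x∈A} T(x,y,z) h(x) can be written as a sum of at most r₂ + r₃ rank-one functions f(y)g(z), where r₂ and r₃ are the numbers of terms of the second and third forms respectively. -/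
theorem stmt13 (F : Type*) [Field F] (A : Type*) [Fintype A]
    (r₁ r₂ r₃ : ℕ) (T : A → A → A → F)
    (f₁ : Fin r₁ → A → F) (g₁ : Fin r₁ → A × A → F)
    (f₂ : Fin r₂ → A → F) (g₂ : Fin r₂ → A × A → F)
    (f₃ : Fin r₃ → A → F) (g₃ : Fin r₃ → A × A → F)
    (hdec : ∀ x y z : A, T x y z =
      (∑ α : Fin r₁, f₁ α x * g₁ α (y, z)) + (∑ β : Fin r₂, f₂ β y * g₂ β (x, z)) +
        (∑ γ : Fin r₃, f₃ γ z * g₃ γ (x, y)))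
    (h : A → F) (hh : ∀ α : Fin r₁, ∑ x : A, f₁ α x * h x = 0) :
    ∃ (u v : Fin (r₂ + r₃) → A → F), ∀ y z : A,
      (∑ x : A, T x y z * h x) = ∑ i : Fin (r₂ + r₃), u i y * v i z := by
  refine ⟨fun i => Fin.addCases (fun β y => f₂ β y)
      (fun γ y => ∑ x : A, g₃ γ (x, y) * h x) i,
    fun i => Fin.addCases (fun β z => ∑ x : A, g₂ β (x, z) * h x)
      (fun γ z => f₃ γ z) i, fun y z => ?_⟩
  rw [Fin.sum_univ_add]
  simp only [Fin.addCases_left, Fin.addCases_right]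
  calc ∑ x : A, T x y z * h x
      = ∑ x : A, ((∑ α : Fin r₁, f₁ α x * g₁ α (y, z)) * h x
        + ((∑ β : Fin r₂, f₂ β y * g₂ β (x, z)) * h x
        + (∑ γ : Fin r₃, f₃ γ z * g₃ γ (x, y)) * h x)) := by
        refine Finset.sum_congr rfl fun x _ => ?_
        rw [hdec x y z]; ring
    _ = ∑ α : Fin r₁, (∑ x : A, f₁ α x * h x) * g₁ α (y, z)
        + ((∑ β : Fin r₂, f₂ β y * ∑ x : A, g₂ β (x, z) * h x)
        + (∑ γ : Fin r₃, (∑ x : A, g₃ γ (x, y) * h x) * f₃ γ z)) := by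
        rw [Finset.sum_add_distrib, Finset.sum_add_distrib]
        congr 1
        · simp only [Finset.sum_mul, Finset.mul_sum]
          rw [Finset.sum_comm]
          exact Finset.sum_congr rfl fun _ _ => Finset.sum_congr rfl fun _ _ => by ring
        congr 1
        · simp only [Finset.sum_mul, Finset.mul_sum]
          rw [Finset.sum_comm]
          exact Finset.sum_congr rfl fun _ _ => Finset.sum_congr rfl fun _ _ => by ring
        · simp only [Finset.sum_mul, Finset.mul_sum]
          rw [Finset.sum_comm]
          exact Finset.sum_congr rfl fun _ _ => Finset.sum_congr rfl fun _ _ => by ring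
    _ = _ := by
        simp only [hh, zero_mul, Finset.sum_const_zero, zero_add]
end

section
/- For q = 3 and any n ≥ 1: if A ⊆ F_3^n contains no three distinct elements x, y, z with ⟨z−x, y−x⟩ = 0, then |A| ≤ C(n+3, 2) + 3 = (n+3)(n+2)/2 + 3. -/
open Finset

lemma swap_sum {M : Type*} [AddCommMonoid M] {n : ℕ} (f : Fin n → Fin n → M)
    (hf : ∀ i j, f i j = f j i) :
    ∑ p ∈ univ.filter (fun p : Fin n × Fin n => p.2 < p.1), f p.1 p.2
      = ∑ p ∈ univ.filter (fun p : Fin n × Fin n => p.1 < p.2), f p.1 p.2 := by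
  apply Finset.sum_bij' (fun p _ => Prod.swap p) (fun p _ => Prod.swap p)
  · intro p hp; simp only [mem_filter, mem_univ, true_and] at hp ⊢; exact hp
  · intro p hp; simp only [mem_filter, mem_univ, true_and] at hp ⊢; exact hp
  · intro p _; simp
  · intro p _; simp
  · intro p _; exact hf _ _

lemma split_le {M : Type*} [AddCommMonoid M] {n : ℕ} (f : Fin n → Fin n → M) :
    ∑ p ∈ univ.filter (fun p : Fin n × Fin n => p.1 ≤ p.2), f p.1 p.2
      = (∑ p ∈ univ.filter (fun p : Fin n × Fin n => p.1 = p.2), f p.1 p.2)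
        + ∑ p ∈ univ.filter (fun p : Fin n × Fin n => p.1 < p.2), f p.1 p.2 := by
  rw [← Finset.sum_union]
  · apply Finset.sum_congr _ (fun _ _ => rfl)
    rw [← Finset.filter_or]
    apply Finset.filter_congr
    intro p _
    simp [le_iff_eq_or_lt]
  · rw [Finset.disjoint_left]
    intro p hp hp'
    simp only [mem_filter, mem_univ, true_and] at hp hp'
    exact absurd hp (ne_of_lt hp')

lemma split_univ {M : Type*} [AddCommMonoid M] {n : ℕ} (f : Fin n → Fin n → M) :
    ∑ i, ∑ j, f i j
      = (∑ p ∈ univ.filter (fun p : Fin n × Fin n => p.1 ≤ p.2), f p.1 p.2)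
        + ∑ p ∈ univ.filter (fun p : Fin n × Fin n => p.2 < p.1), f p.1 p.2 := by
  rw [show (∑ i, ∑ j, f i j) = ∑ p : Fin n × Fin n, f p.1 p.2 from (Fintype.sum_prod_type' f).symm]
  rw [← Finset.sum_filter_add_sum_filter_not univ (fun p : Fin n × Fin n => p.1 ≤ p.2)]
  congr 1
  apply Finset.sum_congr _ (fun _ _ => rfl)
  apply Finset.filter_congr
  intro p _
  simp [not_le]

lemma sym_sum {R : Type*} [CommRing R] {n : ℕ} (f : Fin n → Fin n → R)
    (hf : ∀ i j, f i j = f j i) :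
    ∑ p ∈ univ.filter (fun p : Fin n × Fin n => p.1 ≤ p.2),
        f p.1 p.2 * (if p.1 = p.2 then 1 else 2)
      = ∑ i, ∑ j, f i j := by
  have L := split_le (fun i j => f i j * (if i = j then (1:R) else 2))
  have R := split_le f
  rw [split_univ f, swap_sum f hf, L, R]
  have h1 : ∑ p ∈ univ.filter (fun p : Fin n × Fin n => p.1 = p.2),
      f p.1 p.2 * (if p.1 = p.2 then 1 else 2)
      = ∑ p ∈ univ.filter (fun p : Fin n × Fin n => p.1 = p.2), f p.1 p.2 := by
    apply Finset.sum_congr rfl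
    intro p hp
    simp only [mem_filter, mem_univ, true_and] at hp
    simp [hp]
  have h2 : ∑ p ∈ univ.filter (fun p : Fin n × Fin n => p.1 < p.2),
      f p.1 p.2 * (if p.1 = p.2 then 1 else 2)
      = ∑ p ∈ univ.filter (fun p : Fin n × Fin n => p.1 < p.2), (f p.1 p.2 + f p.1 p.2) := by
    apply Finset.sum_congr rfl
    intro p hp
    simp only [mem_filter, mem_univ, true_and] at hp
    rw [if_neg (ne_of_lt hp)]
    ring
  rw [h1, h2, Finset.sum_add_distrib]
  abel

lemma card_pairs (n : ℕ) :
    2 * (univ.filter (fun p : Fin n × Fin n => p.1 ≤ p.2)).card = n * n + n := by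
  classical
  have key := split_le (M := ℕ) (n := n) (fun _ _ => 1)
  have key2 := split_univ (M := ℕ) (n := n) (fun _ _ => 1)
  have key3 := swap_sum (M := ℕ) (n := n) (fun _ _ => 1) (fun _ _ => rfl)
  have hd : (∑ _p ∈ univ.filter (fun p : Fin n × Fin n => p.1 = p.2), (1:ℕ)) = n := by
    rw [← Finset.card_eq_sum_ones, Finset.card_filter, Fintype.sum_prod_type]
    simp
  have hu : (∑ _i : Fin n, ∑ _j : Fin n, (1:ℕ)) = n * n := by simp [mul_comm]
  rw [Finset.card_eq_sum_ones]
  beta_reduce at key key2 key3 hd hu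
  omega

lemma key_li {F : Type*} [Field F] {β : Type*} {ι : Type*} [Fintype ι] [DecidableEq β]
    (B : Finset β) (w m : β → ι → F)
    (hoff : ∀ b ∈ B, ∀ c ∈ B, b ≠ c → ∑ i, w b i * m c i = 0)
    (hdiag : ∀ b ∈ B, ∑ i, w b i * m b i ≠ 0) :
    B.card ≤ Fintype.card ι := by
  classical
  have hli : LinearIndependent F (fun b : ↥B => w (b : β)) := by
    rw [Fintype.linearIndependent_iff]
    intro g hg c
    have h1 : ∀ i, ∑ b : ↥B, g b * w (b : β) i = 0 := by
      intro i
      have := congrFun hg i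
      simpa [Finset.sum_apply] using this
    have h2 : (0 : F) = g c * ∑ i, w (c : β) i * m (c : β) i := by
      calc (0 : F) = ∑ i, (∑ b : ↥B, g b * w (b : β) i) * m (c : β) i := by rw [show (fun i => (∑ b : ↥B, g b * w (b : β) i) * m (c : β) i) = fun _ => 0 from funext fun i => by rw [h1 i, zero_mul]]; simp
        _ = ∑ i, ∑ b : ↥B, g b * (w (b : β) i * m (c : β) i) := by
            simp_rw [Finset.sum_mul, mul_assoc]
        _ = ∑ b : ↥B, g b * ∑ i, w (b : β) i * m (c : β) i := by
            rw [Finset.sum_comm]; simp_rw [Finset.mul_sum]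
        _ = g c * ∑ i, w (c : β) i * m (c : β) i := by
            apply Finset.sum_eq_single
            · intro b _ hb
              rw [hoff _ b.2 _ c.2 (fun h => hb (Subtype.ext h)), mul_zero]
            · intro h; exact absurd (Finset.mem_univ c) h
    rcases mul_eq_zero.mp h2.symm with h | h
    · exact h
    · exact absurd h (hdiag _ c.2)
  have := hli.fintype_card_le_finrank
  simpa [Module.finrank_fintype_fun_eq_card] using this

theorem stmt15 (n : ℕ) (hn : 1 ≤ n) (A : Finset (Fin n → ZMod 3))
    (hA : ∀ x ∈ A, ∀ y ∈ A, ∀ z ∈ A, x ≠ y → x ≠ z → y ≠ z →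
      ∑ i, (z i - x i) * (y i - x i) ≠ 0) :
    A.card ≤ (n + 3) * (n + 2) / 2 + 3 := by
  classical
  rcases A.eq_empty_or_nonempty with hempty | ⟨a, ha⟩
  · simp [hempty]
  have h3 : ∀ x : ZMod 3, x = 0 ∨ x = 1 ∨ x = 2 := by decide
  set s : (Fin n → ZMod 3) → (Fin n → ZMod 3) → ZMod 3 :=
    fun b c => ∑ i, (b i - a i) * (c i - a i) with hs_def
  have hsymm : ∀ b c, s b c = s c b := by
    intro b c; rw [hs_def]; exact Finset.sum_congr rfl fun i _ => by ring
  set B := A.erase a with hB_def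
  have hBmem : ∀ b ∈ B, b ∈ A ∧ b ≠ a := fun b hb =>
    ⟨Finset.mem_of_mem_erase hb, Finset.ne_of_mem_erase hb⟩
  have hs0 : ∀ b ∈ B, ∀ c ∈ B, b ≠ c → s b c ≠ 0 := by
    intro b hb c hc hbc
    obtain ⟨hbA, hba⟩ := hBmem b hb
    obtain ⟨hcA, hca⟩ := hBmem c hc
    have := hA a ha c hcA b hbA (Ne.symm hca) (Ne.symm hba) (Ne.symm hbc)
    exact this
  have hs1 : ∀ b ∈ B, ∀ c ∈ B, b ≠ c → s b c ≠ s b b := by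
    intro b hb c hc hbc heq
    obtain ⟨hbA, hba⟩ := hBmem b hb
    obtain ⟨hcA, hca⟩ := hBmem c hc
    have h := hA b hbA a ha c hcA hba hbc (Ne.symm hca)
    apply h
    have hcalc : ∑ i, (c i - b i) * (a i - b i) = s b b - s b c := by
      rw [hs_def]
      rw [← Finset.sum_sub_distrib]
      exact Finset.sum_congr rfl fun i _ => by ring
    rw [hcalc, heq, sub_self]
  set B0 := B.filter (fun b => s b b = 0) with hB0_def
  set B1 := B.filter (fun b => s b b = 1) with hB1_def
  set B2 := B.filter (fun b => s b b = 2) with hB2_def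
  have hcover : B ⊆ (B0 ∪ B1) ∪ B2 := by
    intro b hb
    simp only [hB0_def, hB1_def, hB2_def, Finset.mem_union, Finset.mem_filter]
    rcases h3 (s b b) with h | h | h <;> tauto
  -- the sum computation for B0
  have hopt : ∀ b c : Fin n → ZMod 3,
      (∑ x : Option {p : Fin n × Fin n // p.1 ≤ p.2},
        (x.elim 1 fun p => -((b p.1.1 - a p.1.1) * (b p.1.2 - a p.1.2)) *
            (if p.1.1 = p.1.2 then 1 else 2)) *
        (x.elim 1 fun p => (c p.1.1 - a p.1.1) * (c p.1.2 - a p.1.2)))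
      = 1 - s b c * s b c := by
    intro b c
    rw [Fintype.sum_option]
    simp only [Option.elim_none, Option.elim_some, one_mul]
    have step1 : (∑ p : {p : Fin n × Fin n // p.1 ≤ p.2},
        (-((b p.1.1 - a p.1.1) * (b p.1.2 - a p.1.2)) * (if p.1.1 = p.1.2 then 1 else 2)) *
          ((c p.1.1 - a p.1.1) * (c p.1.2 - a p.1.2)))
        = ∑ p ∈ Finset.univ.filter (fun p : Fin n × Fin n => p.1 ≤ p.2),
            (-(((b p.1 - a p.1) * (c p.1 - a p.1)) * ((b p.2 - a p.2) * (c p.2 - a p.2)))) *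
              (if p.1 = p.2 then 1 else 2) := by
      rw [Finset.sum_subtype (p := fun p : Fin n × Fin n => p.1 ≤ p.2)
        (Finset.univ.filter (fun p : Fin n × Fin n => p.1 ≤ p.2)) (by simp)]
      exact Finset.sum_congr rfl fun p _ => by ring
    rw [step1]
    have step2 : (∑ p ∈ Finset.univ.filter (fun p : Fin n × Fin n => p.1 ≤ p.2),
        (-(((b p.1 - a p.1) * (c p.1 - a p.1)) * ((b p.2 - a p.2) * (c p.2 - a p.2)))) *
          (if p.1 = p.2 then 1 else 2))
        = ∑ i, ∑ j, -(((b i - a i) * (c i - a i)) * ((b j - a j) * (c j - a j))) :=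
      sym_sum (fun i j => -(((b i - a i) * (c i - a i)) * ((b j - a j) * (c j - a j)))) (fun i j => by ring)
    rw [step2]
    have step3 : (∑ i, ∑ j, -(((b i - a i) * (c i - a i)) * ((b j - a j) * (c j - a j))))
        = -(s b c * s b c) := by
      rw [hs_def]
      rw [Finset.sum_mul_sum]
      rw [← Finset.sum_neg_distrib]
      exact Finset.sum_congr rfl fun i _ => by rw [← Finset.sum_neg_distrib]
    rw [step3]; ring
  -- bound on B0
  have hB0card : B0.card ≤ (Finset.univ.filter (fun p : Fin n × Fin n => p.1 ≤ p.2)).card + 1 := by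
    have := key_li (F := ZMod 3) (ι := Option {p : Fin n × Fin n // p.1 ≤ p.2}) B0
      (fun b x => x.elim 1 fun p => -((b p.1.1 - a p.1.1) * (b p.1.2 - a p.1.2)) *
          (if p.1.1 = p.1.2 then 1 else 2))
      (fun c x => x.elim 1 fun p => (c p.1.1 - a p.1.1) * (c p.1.2 - a p.1.2))
      ?_ ?_
    · simpa [Fintype.card_option, Fintype.card_subtype] using this
    · intro b hb c hc hbc
      simp only [hB0_def, Finset.mem_filter] at hb hc
      rw [hopt b c]
      have hne := hs0 b hb.1 c hc.1 hbc
      have : s b c * s b c = 1 := by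
        rcases h3 (s b c) with h | h | h <;> rw [h] <;> first | (exact absurd h hne) | decide
      rw [this, sub_self]
    · intro b hb
      simp only [hB0_def, Finset.mem_filter] at hb
      rw [hopt b b, hb.2]
      decide
  -- bound on B1
  have hB1card : B1.Nonempty → B2.Nonempty → False := by
    rintro ⟨b, hb⟩ ⟨c, hc⟩
    simp only [hB1_def, hB2_def, Finset.mem_filter] at hb hc
    have hbc : b ≠ c := fun h => by rw [h, hc.2] at hb; exact absurd hb.2 (by decide)
    have h1 := hs0 b hb.1 c hc.1 hbc
    have h2 := hs1 b hb.1 c hc.1 hbc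
    have h4 := hs1 c hc.1 b hb.1 (Ne.symm hbc)
    rw [hsymm c b] at h4
    rw [hb.2] at h2; rw [hc.2] at h4
    rcases h3 (s b c) with h | h | h
    · exact h1 h
    · exact h2 h
    · exact h4 h
  have hB1le : B1.card ≤ n + 1 := by
    have := key_li (F := ZMod 3) B1
      (fun b x => Sum.elim (fun i => b i - a i) (fun _ : Unit => 1) x)
      (fun c x => Sum.elim (fun i => c i - a i) (fun _ : Unit => 1) x)
      ?_ ?_
    · simpa using this
    · intro b hb c hc hbc
      simp only [hB1_def, Finset.mem_filter] at hb hc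
      rw [Fintype.sum_sum_type]
      simp only [Sum.elim_inl, Sum.elim_inr, mul_one]
      have h1 := hs0 b hb.1 c hc.1 hbc
      have h2 := hs1 b hb.1 c hc.1 hbc
      rw [hb.2] at h2
      have : s b c = 2 := by
        rcases h3 (s b c) with h | h | h
        exacts [absurd h h1, absurd h h2, h]
      have h2' : (∑ x : Fin n, (b x - a x) * (c x - a x)) = 2 := this
      rw [h2']
      simp
      decide
    · intro b hb
      simp only [hB1_def, Finset.mem_filter] at hb
      rw [Fintype.sum_sum_type]
      simp only [Sum.elim_inl, Sum.elim_inr, mul_one]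
      have h2' : (∑ x : Fin n, (b x - a x) * (b x - a x)) = 1 := hb.2
      rw [h2']
      simp
      decide
  have hB2le : B2.card ≤ n + 2 := by
    have := key_li (F := ZMod 3) (ι := Fin n ⊕ Bool) B2
      (fun b x => Sum.elim (fun i => b i - a i) (fun _ : Bool => 1) x)
      (fun c x => Sum.elim (fun i => c i - a i) (fun _ : Bool => 1) x)
      ?_ ?_
    · simpa using this
    · intro b hb c hc hbc
      simp only [hB2_def, Finset.mem_filter] at hb hc
      rw [Fintype.sum_sum_type]
      simp only [Sum.elim_inl, Sum.elim_inr, mul_one]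
      have h1 := hs0 b hb.1 c hc.1 hbc
      have h2 := hs1 b hb.1 c hc.1 hbc
      rw [hb.2] at h2
      have : s b c = 1 := by
        rcases h3 (s b c) with h | h | h
        exacts [absurd h h1, h, absurd h h2]
      have h2' : (∑ x : Fin n, (b x - a x) * (c x - a x)) = 1 := this
      rw [h2']
      simp
      decide
    · intro b hb
      simp only [hB2_def, Finset.mem_filter] at hb
      rw [Fintype.sum_sum_type]
      simp only [Sum.elim_inl, Sum.elim_inr, mul_one]
      have h2' : (∑ x : Fin n, (b x - a x) * (b x - a x)) = 2 := hb.2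
      rw [h2']
      simp
      decide
  -- counting
  have hcard1 : B.card + 1 = A.card := Finset.card_erase_add_one ha
  have hUnion : B.card ≤ B0.card + B1.card + B2.card :=
    calc B.card ≤ ((B0 ∪ B1) ∪ B2).card := Finset.card_le_card hcover
      _ ≤ (B0 ∪ B1).card + B2.card := Finset.card_union_le _ _
      _ ≤ B0.card + B1.card + B2.card := Nat.add_le_add_right (Finset.card_union_le _ _) _
  have h12 : B1.card + B2.card ≤ n + 2 := by
    rcases Finset.eq_empty_or_nonempty B1 with h | h
    · rw [h, Finset.card_empty]
      omega
    · have h2 : B2 = ∅ :=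
        Finset.not_nonempty_iff_eq_empty.mp (fun h2 => hB1card h h2)
      rw [h2, Finset.card_empty]
      omega
  have e2 : 2 * (Finset.univ.filter (fun p : Fin n × Fin n => p.1 ≤ p.2)).card = n * n + n :=
    card_pairs n
  have e1 : (n + 3) * (n + 2) = n * n + 5 * n + 6 := by ring
  rw [e1]
  generalize n * n = m at e2 ⊢
  omega
end

section
/- Let F be a field and A a finite set of size m. The function S : A × A × A → F defined by S(x,y,z) = Σ_{a∈A} δ_a(x) δ_a(y) δ_a(z) (equal to 1 if x = y = z and 0 otherwise) cannot be written as a sum of fewer than m functions of the forms f(x)g(y,z), f(y)g(x,z), f(z)g(x,y); i.e., its slice rank is exactly m. -/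
open Matrix Module

lemma rank_add_le' {F A : Type*} [Field F] [Fintype A] (M N : Matrix A A F) :
    (M + N).rank ≤ M.rank + N.rank := by
  rw [Matrix.rank, Matrix.rank, Matrix.rank, Matrix.mulVecLin_add]
  refine le_trans (Submodule.finrank_mono ?_) (Submodule.finrank_add_le_finrank_add_finrank _ _)
  rintro x ⟨y, rfl⟩
  exact Submodule.add_mem_sup ⟨y, rfl⟩ ⟨y, rfl⟩

lemma rank_vecMulVec_le' {F A : Type*} [Field F] [Fintype A] (w v : A → F) :
    (Matrix.vecMulVec w v).rank ≤ 1 := by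
  rw [Matrix.vecMulVec_eq (Fin 1)]
  exact le_trans (Matrix.rank_mul_le_left _ _) (le_trans (Matrix.rank_le_card_width _) (by simp))

lemma rank_sum_le' {F A : Type*} [Field F] [Fintype A] (r : ℕ) (M : Fin r → Matrix A A F)
    (hM : ∀ i, (M i).rank ≤ 1) : (∑ i, M i).rank ≤ r := by
  induction r with
  | zero => simp [Matrix.rank_zero]
  | succ n ih =>
      rw [Fin.sum_univ_castSucc]
      refine le_trans (rank_add_le' _ _) (le_trans (add_le_add
        (ih (fun i => M i.castSucc) (fun i => hM _)) (hM (Fin.last n))) (by omega))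

def sliceMap {F A : Type*} [Field F] [Fintype A] (r : ℕ) (f : Fin r → A → F) :
    (A → F) →ₗ[F] (Fin r → F) where
  toFun h := fun γ => ∑ z, f γ z * h z
  map_add' a b := by funext γ; simp [mul_add, Finset.sum_add_distrib]
  map_smul' c a := by funext γ; simp [Finset.mul_sum, mul_left_comm]

lemma exists_large_support_s16 {F A : Type*} [Field F] [Fintype A] [DecidableEq A]
    (V : Submodule F (A → F)) :
    ∃ h ∈ V, finrank F V ≤ Nat.card {x // h x ≠ 0} := by
  classical
  set supp : (A → F) → Finset A := fun h => Finset.univ.filter (h · ≠ 0) with hsupp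
  have hcard : ∀ h : A → F, Nat.card {x // h x ≠ 0} = (supp h).card := by
    intro h
    rw [Nat.card_eq_fintype_card, Fintype.card_subtype]
  set S : Set ℕ := {n | ∃ h ∈ V, (supp h).card = n} with hS
  have hne : S.Nonempty := ⟨(supp 0).card, 0, V.zero_mem, rfl⟩
  have hbdd : BddAbove S := by
    refine ⟨Fintype.card A, ?_⟩
    rintro n ⟨h, -, rfl⟩
    exact le_trans (Finset.card_filter_le _ _) (by simp)
  obtain ⟨h, hV, hmax⟩ : ∃ h ∈ V, (supp h).card = sSup S := Nat.sSup_mem hne hbdd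
  refine ⟨h, hV, ?_⟩
  rw [hcard]
  by_contra hlt
  push_neg at hlt
  set ρ : (A → F) →ₗ[F] ({x // x ∈ supp h} → F) :=
    LinearMap.funLeft F F (fun x : {x // x ∈ supp h} => (x : A)) with hρ
  set f : V →ₗ[F] ({x // x ∈ supp h} → F) := ρ.domRestrict V with hf
  have hrn := LinearMap.finrank_range_add_finrank_ker f
  have hr : finrank F (LinearMap.range f) ≤ (supp h).card := by
    refine le_trans (Submodule.finrank_le _) ?_
    simp [finrank_pi, Fintype.card_coe]
  have hker : 0 < finrank F (LinearMap.ker f) := by omega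
  have : Nontrivial (LinearMap.ker f) := Module.finrank_pos_iff.mp hker
  obtain ⟨x, hx⟩ := exists_ne (0 : LinearMap.ker f)
  set h' : A → F := ((x : V) : A → F) with hh'
  have hh'V : (h' : A → F) ∈ V := (x : V).2
  have hh'0 : ∀ a ∈ supp h, h' a = 0 := by
    intro a ha
    have := x.2
    rw [LinearMap.mem_ker] at this
    exact congrFun this ⟨a, ha⟩
  have hh'ne : h' ≠ 0 := by
    intro hc
    apply hx
    ext
    exact congrFun hc _
  obtain ⟨a₀, ha₀⟩ : ∃ a, h' a ≠ 0 := Function.ne_iff.mp hh'ne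
  have ha₀h : a₀ ∉ supp h := fun hc => ha₀ (hh'0 _ hc)
  have hsub : insert a₀ (supp h) ⊆ supp (h + h') := by
    intro a ha
    rcases Finset.mem_insert.mp ha with rfl | ha
    · have : h a = 0 := by
        by_contra hc
        exact ha₀h (Finset.mem_filter.mpr ⟨Finset.mem_univ _, hc⟩)
      simp only [hsupp, Finset.mem_filter, Finset.mem_univ, true_and, Pi.add_apply]
      rw [this, zero_add]; exact ha₀
    · have h1 : h a ≠ 0 := (Finset.mem_filter.mp ha).2
      simp only [hsupp, Finset.mem_filter, Finset.mem_univ, true_and, Pi.add_apply]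
      rw [hh'0 a ha, add_zero]; exact h1
  have hmem : (supp (h + h')).card ∈ S := ⟨h + h', V.add_mem hV hh'V, rfl⟩
  have := Finset.card_le_card hsub
  rw [Finset.card_insert_of_notMem ha₀h] at this
  have hle : (supp (h + h')).card ≤ sSup S := le_csSup hbdd hmem
  omega

theorem stmt16 (F : Type*) [Field F] (A : Type*) [Fintype A] [DecidableEq A]
    (m : ℕ) (hm : Fintype.card A = m) :
    (∀ (r₁ r₂ r₃ : ℕ)
      (f₁ : Fin r₁ → A → F) (g₁ : Fin r₁ → A × A → F)
      (f₂ : Fin r₂ → A → F) (g₂ : Fin r₂ → A × A → F)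
      (f₃ : Fin r₃ → A → F) (g₃ : Fin r₃ → A × A → F),
      (∀ x y z : A, (if x = y ∧ y = z then (1:F) else 0) =
        (∑ α : Fin r₁, f₁ α x * g₁ α (y, z)) + (∑ β : Fin r₂, f₂ β y * g₂ β (x, z)) +
          (∑ γ : Fin r₃, f₃ γ z * g₃ γ (x, y))) → m ≤ r₁ + r₂ + r₃) ∧
    (∃ (f : Fin m → A → F) (g : Fin m → A × A → F),
      ∀ x y z : A, (if x = y ∧ y = z then (1:F) else 0) =
        ∑ α : Fin m, f α x * g α (y, z)) := by
  constructor
  · intro r₁ r₂ r₃ f₁ g₁ f₂ g₂ f₃ g₃ heq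
    classical
    set Φ : (A → F) →ₗ[F] (Fin r₃ → F) := sliceMap r₃ f₃ with hΦdef
    obtain ⟨h, hV, hle⟩ := exists_large_support_s16 (LinearMap.ker Φ)
    have hΦ : ∀ γ, ∑ z, f₃ γ z * h z = 0 := fun γ =>
      congrFun (LinearMap.mem_ker.mp hV) γ
    have hrn := LinearMap.finrank_range_add_finrank_ker Φ
    have h1 : finrank F (A → F) = m := by
      rw [Module.finrank_pi, hm]
    have h2 : finrank F (LinearMap.range Φ) ≤ r₃ :=
      le_trans (Submodule.finrank_le _) (by simp [Module.finrank_pi])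
    have key : ∀ x y : A, (if x = y then h y else 0) =
        (∑ α, f₁ α x * ∑ z, g₁ α (y, z) * h z) +
          ∑ β, (∑ z, g₂ β (x, z) * h z) * f₂ β y := by
      intro x y
      have e1 : (if x = y then h y else 0) =
          ∑ z, (if x = y ∧ y = z then (1:F) else 0) * h z := by
        by_cases hxy : x = y
        · simp [hxy]
        · simp [hxy]
      rw [e1]
      calc ∑ z, (if x = y ∧ y = z then (1:F) else 0) * h z
          = ∑ z, ((∑ α, f₁ α x * g₁ α (y, z)) + (∑ β, f₂ β y * g₂ β (x, z)) +
              (∑ γ, f₃ γ z * g₃ γ (x, y))) * h z :=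
            Finset.sum_congr rfl fun z _ => by rw [← heq x y z]
        _ = ((∑ α, f₁ α x * ∑ z, g₁ α (y, z) * h z) +
              ∑ β, (∑ z, g₂ β (x, z) * h z) * f₂ β y) +
            ∑ γ, g₃ γ (x, y) * ∑ z, f₃ γ z * h z := by
            simp only [add_mul, Finset.sum_add_distrib, Finset.sum_mul]
            congr 1
            · congr 1
              · rw [Finset.sum_comm]
                exact Finset.sum_congr rfl fun α _ => by
                  rw [Finset.mul_sum]
                  exact Finset.sum_congr rfl fun z _ => by ring
              · rw [Finset.sum_comm]
                exact Finset.sum_congr rfl fun β _ =>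
                  Finset.sum_congr rfl fun z _ => by ring
            · rw [Finset.sum_comm]
              exact Finset.sum_congr rfl fun γ _ => by
                rw [Finset.mul_sum]
                exact Finset.sum_congr rfl fun z _ => by ring
        _ = _ := by simp [hΦ]
    have hmat : Matrix.diagonal h =
        (∑ α, Matrix.vecMulVec (f₁ α) (fun y => ∑ z, g₁ α (y, z) * h z)) +
          ∑ β, Matrix.vecMulVec (fun x => ∑ z, g₂ β (x, z) * h z) (f₂ β) := by
      ext i j
      have := key i j
      by_cases hij : i = j
      · subst hij
        simpa [Matrix.diagonal_apply, Matrix.add_apply, Matrix.sum_apply,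
          Matrix.vecMulVec_apply] using this
      · simpa [Matrix.diagonal_apply, hij, Matrix.add_apply, Matrix.sum_apply,
          Matrix.vecMulVec_apply] using this
    have hrank1 : (Matrix.diagonal h).rank = Fintype.card {x // h x ≠ 0} :=
      Matrix.rank_diagonal h
    have hrank2 : (Matrix.diagonal h).rank ≤ r₁ + r₂ := by
      rw [hmat]
      refine le_trans (rank_add_le' _ _) (add_le_add ?_ ?_)
      · exact rank_sum_le' _ _ fun α => rank_vecMulVec_le' _ _
      · exact rank_sum_le' _ _ fun β => rank_vecMulVec_le' _ _
    have hle' : Nat.card {x // h x ≠ 0} = Fintype.card {x // h x ≠ 0} :=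
      Nat.card_eq_fintype_card
    omega
  · obtain ⟨e⟩ : Nonempty (A ≃ Fin m) := ⟨Fintype.equivFinOfCardEq hm⟩
    refine ⟨fun α x => if x = e.symm α then 1 else 0,
      fun α p => if p.1 = e.symm α ∧ p.2 = e.symm α then 1 else 0, fun x y z => ?_⟩
    rw [← Equiv.sum_comp e (fun α => _)]
    simp only [Equiv.symm_apply_apply]
    by_cases hc : x = y ∧ y = z
    · obtain ⟨rfl, rfl⟩ := hc
      simp
    · rw [if_neg hc, eq_comm, Finset.sum_eq_zero]
      intro a _
      rw [ite_mul, one_mul, zero_mul]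
      split_ifs with h1 h2
      · exact absurd ⟨h1.trans h2.1.symm, h2.1.trans h2.2.symm⟩ hc
      · rfl
      · rfl
end

section
/- Let q be an odd prime power, n ≥ 1, and A ⊆ F_q^n with no right angles. Then the 3-variable function f(x,y,z) = (1 − Σ_{a∈A} δ_a(y)δ_a(z)) · ⟨z−x, y−x⟩^{q−1} on A×A×A can be written as a sum of at most C(n+q, q−1) rank-one functions of the form F(x) G(y,z). -/
theorem stmt17 (q n : ℕ) (hn : 1 ≤ n) (F : Type*) [Field F] [Fintype F] [DecidableEq F]
    (hq : Fintype.card F = q) (hodd : Odd q) (A : Finset (Fin n → F))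
    (hA : ∀ x ∈ A, ∀ y ∈ A, ∀ z ∈ A, x ≠ y → x ≠ z → y ≠ z →
      ∑ i, (z i - x i) * (y i - x i) ≠ 0) :
    ∃ r ≤ (n + q).choose (q - 1), ∃ (u : Fin r → (Fin n → F) → F)
      (v : Fin r → (Fin n → F) × (Fin n → F) → F),
      ∀ x ∈ A, ∀ y ∈ A, ∀ z ∈ A,
        (1 - ∑ a ∈ A, (if y = a then (1:F) else 0) * (if z = a then 1 else 0)) *
          (∑ i, (z i - x i) * (y i - x i)) ^ (q - 1) =
        ∑ i : Fin r, u i x * v i (y, z) := by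
  classical
  have hq1 : 1 ≤ q := hq ▸ Fintype.card_pos
  set ι := (Fin n) ⊕ (Fin 2) with hι
  -- the rank-1 factor pieces
  set P : ι → (Fin n → F) → F := fun j x => match j with
    | Sum.inl i => x i
    | Sum.inr ⟨0, _⟩ => ∑ i, x i * x i
    | Sum.inr ⟨1, _⟩ => 1 with hP
  set Q : ι → (Fin n → F) × (Fin n → F) → F := fun j p => match j with
    | Sum.inl i => -(p.1 i + p.2 i)
    | Sum.inr ⟨0, _⟩ => 1
    | Sum.inr ⟨1, _⟩ => ∑ i, p.1 i * p.2 i with hQ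
  have key : ∀ (x : Fin n → F) (p : (Fin n → F) × (Fin n → F)),
      ∑ i, (p.2 i - x i) * (p.1 i - x i) = ∑ j : ι, P j x * Q j p := by
    intro x p
    rw [Fintype.sum_sum_type]
    have h2 : ∑ j : Fin 2, P (Sum.inr j) x * Q (Sum.inr j) p
        = (∑ i, x i * x i) + ∑ i, p.1 i * p.2 i := by
      rw [Fin.sum_univ_two]; simp [hP, hQ]
    rw [h2]
    have h1 : ∀ i : Fin n, P (Sum.inl i) x * Q (Sum.inl i) p
        = x i * (-(p.1 i + p.2 i)) := fun i => rfl
    simp_rw [h1, ← Finset.sum_add_distrib]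
    exact Finset.sum_congr rfl fun i _ => by ring
  set s : Finset (Sym ι (q - 1)) := (Finset.univ : Finset ι).sym (q - 1) with hs
  refine ⟨s.card, ?_, ?_⟩
  · have : s = Finset.univ := Finset.sym_univ _
    rw [this, ← Fintype.card, Sym.card_sym_eq_choose]
    have hcard : Fintype.card ι = n + 2 := by simp [hι]
    rw [hcard]
    have : n + 2 + (q - 1) - 1 = n + q := by omega
    rw [this]
  · set U : Sym ι (q - 1) → (Fin n → F) → F := fun k x =>
      (k.1.countPerms : F) * (k.1.map fun j => P j x).prod with hU
    set V : Sym ι (q - 1) → (Fin n → F) × (Fin n → F) → F := fun k p =>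
      (1 - ∑ a ∈ A, (if p.1 = a then (1:F) else 0) * (if p.2 = a then 1 else 0)) *
        (k.1.map fun j => Q j p).prod with hV
    refine ⟨fun i => U (s.equivFin.symm i), fun i => V (s.equivFin.symm i), ?_⟩
    intro x _ y _ z _
    have hsum : ∀ (x : Fin n → F) (p : (Fin n → F) × (Fin n → F)),
        ∑ i : Fin s.card, U (s.equivFin.symm i) x * V (s.equivFin.symm i) p
        = ∑ k ∈ s, U k x * V k p := by
      intro x p
      rw [← Finset.sum_coe_sort s (fun k => U k x * V k p)]
      exact Fintype.sum_equiv s.equivFin.symm _ _ (fun i => rfl)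
    rw [hsum, key x (y, z), Finset.sum_pow, Finset.mul_sum, ← hs]
    refine Finset.sum_congr rfl fun k _ => ?_
    rw [hU, hV]
    simp only []
    rw [Multiset.prod_map_mul]
    ring
end
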